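/- arXiv:2601.08548 — 2 statements merged into one kernel-verified Lean document; each statement's English description precedes it below -/
import Mathlib

section
/- Let f : ℝ → ℝ be smooth and β, c real constants. If p, v : ℝ × ℝ → ℝ are smooth and satisfy the system ∂²ₓv = f′(p)·∂ₜp − β ∂²ₓp and ∂ₜv = c² p at every point, then the continuity equation ∂ₜT₂ + ∂ₓΦ₂ = 0 holds at every point with T₂ = x·f(p) and Φ₂ = β·(p − x ∂ₓp) + v − x ∂ₓv. (This is a nonlocal conservation law, since the flux involves v = c² ∂ₜ⁻¹ p; likewise ∂ₜ(f(p)) + ∂ₓ(−β ∂ₓp − ∂ₓv) = 0 holds.) -/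
noncomputable def Dt (F : ℝ × ℝ → ℝ) : ℝ × ℝ → ℝ :=
  fun z => deriv (fun s => F (s, z.2)) z.1

noncomputable def Dx (F : ℝ × ℝ → ℝ) : ℝ × ℝ → ℝ :=
  fun z => deriv (fun y => F (z.1, y)) z.2

lemma hasDerivAt_sliceX (F : ℝ × ℝ → ℝ) (hF : ContDiff ℝ (⊤ : ℕ∞) F) (t x : ℝ) :
    HasDerivAt (fun y => F (t, y)) (Dx F (t, x)) x := by
  have h : HasDerivAt (fun y : ℝ => (t, y)) ((0 : ℝ), (1 : ℝ)) x :=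
    (hasDerivAt_const x t).prodMk (hasDerivAt_id x)
  have H := (hF.differentiable (by simp) (t, x)).hasFDerivAt.comp_hasDerivAt x h
  have e : Dx F (t, x) = fderiv ℝ F (t, x) ((0 : ℝ), (1 : ℝ)) := H.deriv
  rw [e]; exact H

lemma hasDerivAt_sliceT (F : ℝ × ℝ → ℝ) (hF : ContDiff ℝ (⊤ : ℕ∞) F) (t x : ℝ) :
    HasDerivAt (fun s => F (s, x)) (Dt F (t, x)) t := by
  have h : HasDerivAt (fun s : ℝ => (s, x)) ((1 : ℝ), (0 : ℝ)) t :=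
    (hasDerivAt_id t).prodMk (hasDerivAt_const t x)
  have H := (hF.differentiable (by simp) (t, x)).hasFDerivAt.comp_hasDerivAt t h
  have e : Dt F (t, x) = fderiv ℝ F (t, x) ((1 : ℝ), (0 : ℝ)) := H.deriv
  rw [e]; exact H

lemma contDiff_Dx (F : ℝ × ℝ → ℝ) (hF : ContDiff ℝ (⊤ : ℕ∞) F) : ContDiff ℝ (⊤ : ℕ∞) (Dx F) := by
  have e : Dx F = fun z => fderiv ℝ F z ((0 : ℝ), (1 : ℝ)) := by
    funext z
    have h : HasDerivAt (fun y : ℝ => (z.1, y)) ((0 : ℝ), (1 : ℝ)) z.2 :=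
      (hasDerivAt_const z.2 z.1).prodMk (hasDerivAt_id z.2)
    exact ((hF.differentiable (by simp) z).hasFDerivAt.comp_hasDerivAt z.2 h).deriv
  rw [e]
  exact (hF.fderiv_right (by simp)).clm_apply contDiff_const

/-- Nonlocal conservation laws of the first layer of the second potential system
`vₓₓ = f'(p) pₜ − β pₓₓ`, `vₜ = c² p`:
`T₂ = x f(p)`, `Φ₂ = β (p − x pₓ) + v − x vₓ`, and also
`T₁ = f(p)`, `Φ₁ = −β pₓ − vₓ`. -/
theorem secondPotential_firstLayer_conservation_laws
    (f : ℝ → ℝ) (hf : ContDiff ℝ (⊤ : ℕ∞) f) (β c : ℝ)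
    (p v : ℝ × ℝ → ℝ) (hp : ContDiff ℝ (⊤ : ℕ∞) p) (hv : ContDiff ℝ (⊤ : ℕ∞) v)
    (hsys : ∀ z : ℝ × ℝ,
      Dx (Dx v) z = deriv f (p z) * Dt p z - β * Dx (Dx p) z ∧
      Dt v z = c ^ 2 * p z) :
    ∀ z : ℝ × ℝ,
      (Dt (fun w => w.2 * f (p w)) z
        + Dx (fun w => β * (p w - w.2 * Dx p w) + v w - w.2 * Dx v w) z = 0) ∧
      (Dt (fun w => f (p w)) z + Dx (fun w => -β * Dx p w - Dx v w) z = 0) := by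
  rintro ⟨t, x⟩
  obtain ⟨h1, _⟩ := hsys (t, x)
  -- basic derivatives
  have hpt : HasDerivAt (fun s => p (s, x)) (Dt p (t, x)) t := hasDerivAt_sliceT p hp t x
  have hpx : HasDerivAt (fun y => p (t, y)) (Dx p (t, x)) x := hasDerivAt_sliceX p hp t x
  have hvx : HasDerivAt (fun y => v (t, y)) (Dx v (t, x)) x := hasDerivAt_sliceX v hv t x
  have hpxx : HasDerivAt (fun y => Dx p (t, y)) (Dx (Dx p) (t, x)) x :=
    hasDerivAt_sliceX (Dx p) (contDiff_Dx p hp) t x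
  have hvxx : HasDerivAt (fun y => Dx v (t, y)) (Dx (Dx v) (t, x)) x :=
    hasDerivAt_sliceX (Dx v) (contDiff_Dx v hv) t x
  have hfd : HasDerivAt f (deriv f (p (t, x))) (p (t, x)) :=
    ((hf.differentiable (by simp)) (p (t, x))).hasDerivAt
  -- chain rule in t
  have hfp : HasDerivAt (fun s => f (p (s, x))) (deriv f (p (t, x)) * Dt p (t, x)) t :=
    HasDerivAt.comp t hfd hpt
  -- Dt of T₂
  have hT2 : Dt (fun w => w.2 * f (p w)) (t, x)
      = x * (deriv f (p (t, x)) * Dt p (t, x)) := (hfp.const_mul x).deriv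
  -- Dt of T₁
  have hT1 : Dt (fun w => f (p w)) (t, x)
      = deriv f (p (t, x)) * Dt p (t, x) := hfp.deriv
  -- Dx of Φ₂
  have hmulp : HasDerivAt (fun y => y * Dx p (t, y))
      (1 * Dx p (t, x) + x * Dx (Dx p) (t, x)) x := (hasDerivAt_id x).mul hpxx
  have hmulv : HasDerivAt (fun y => y * Dx v (t, y))
      (1 * Dx v (t, x) + x * Dx (Dx v) (t, x)) x := (hasDerivAt_id x).mul hvxx
  have hPhi2 : Dx (fun w => β * (p w - w.2 * Dx p w) + v w - w.2 * Dx v w) (t, x)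
      = β * (Dx p (t, x) - (1 * Dx p (t, x) + x * Dx (Dx p) (t, x)))
        + Dx v (t, x) - (1 * Dx v (t, x) + x * Dx (Dx v) (t, x)) :=
    ((((hpx.sub hmulp).const_mul β).add hvx).sub hmulv).deriv
  -- Dx of Φ₁
  have hPhi1 : Dx (fun w => -β * Dx p w - Dx v w) (t, x)
      = -β * Dx (Dx p) (t, x) - Dx (Dx v) (t, x) :=
    ((hpxx.const_mul (-β)).sub hvxx).deriv
  constructor
  · rw [hT2, hPhi2, h1]; ring
  · rw [hT1, hPhi1, h1]; ring
end

section
/- Let k, q, p₀, β, c, μ be real constants and let f(p) = k·(p + p₀)^{1+q} (real power). Suppose p, u : ℝ × ℝ → ℝ are smooth, p(t,x) + p₀ > 0 everywhere, and (p,u) satisfies the first-layer potential system ∂ₓu = f′(p)·∂ₜp − μ ∂²ₓp and ∂ₜu = c² ∂ₓp + (β − μ) ∂ₜ∂ₓp at every point. Then for every λ > 0 the scaled pair p̃(t,x) = λ⁻²·(p(t, λ^{−q} x) + p₀) − p₀, ũ(t,x) = λ^{−(q+2)}·u(t, λ^{−q} x) also satisfies p̃(t,x) + p₀ > 0 and solves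 the same first-layer potential system at every point. (This is the finite form of the potential scaling symmetry with characteristic P^u = −(q+2)u − q x uₓ.) -/
/-- `(p, u)` solves the first-layer potential system
`uₓ = f'(p) pₜ − μ pₓₓ`, `uₜ = c² pₓ + (β − μ) pₜₓ` everywhere. -/
def FirstLayerPotentialSystem (f : ℝ → ℝ) (β c μ : ℝ) (p u : ℝ × ℝ → ℝ) : Prop :=
  ∀ z : ℝ × ℝ,
    Dx u z = deriv f (p z) * Dt p z - μ * Dx (Dx p) z ∧
    Dt u z = c ^ 2 * Dx p z + (β - μ) * Dt (Dx p) z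

section aux

variable {F : ℝ × ℝ → ℝ}

lemma slice_t_hasDerivAt (hF : ContDiff ℝ (⊤ : ℕ∞) F) (t y : ℝ) :
    HasDerivAt (fun s => F (s, y)) (Dt F (t, y)) t := by
  have h : DifferentiableAt ℝ (fun s => F (s, y)) t :=
    ((hF.differentiable (by simp)).comp
      (differentiable_id.prodMk (differentiable_const y))).differentiableAt
  exact h.hasDerivAt

lemma slice_x_hasDerivAt (hF : ContDiff ℝ (⊤ : ℕ∞) F) (t y : ℝ) :
    HasDerivAt (fun s => F (t, s)) (Dx F (t, y)) y := by
  have h : DifferentiableAt ℝ (fun s => F (t, s)) y :=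
    ((hF.differentiable (by simp)).comp
      ((differentiable_const t).prodMk differentiable_id)).differentiableAt
  exact h.hasDerivAt

lemma Dx_eq_fderiv (hF : ContDiff ℝ (⊤ : ℕ∞) F) (z : ℝ × ℝ) :
    Dx F z = fderiv ℝ F z (0, 1) := by
  have hpair : HasDerivAt (fun y => ((z.1 : ℝ), y)) ((0 : ℝ), (1 : ℝ)) z.2 :=
    (hasDerivAt_const _ _).prodMk (hasDerivAt_id _)
  have h : HasDerivAt (fun y => F (z.1, y)) (fderiv ℝ F (z.1, z.2) ((0 : ℝ), (1 : ℝ))) z.2 :=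
    HasFDerivAt.comp_hasDerivAt z.2
      ((hF.differentiable (by simp)) (z.1, z.2)).hasFDerivAt hpair
  simpa [Dx] using h.deriv

lemma Dt_eq_fderiv (hF : ContDiff ℝ (⊤ : ℕ∞) F) (z : ℝ × ℝ) :
    Dt F z = fderiv ℝ F z (1, 0) := by
  have hpair : HasDerivAt (fun s => (s, (z.2 : ℝ))) ((1 : ℝ), (0 : ℝ)) z.1 :=
    (hasDerivAt_id _).prodMk (hasDerivAt_const _ _)
  have h : HasDerivAt (fun s => F (s, z.2)) (fderiv ℝ F (z.1, z.2) ((1 : ℝ), (0 : ℝ))) z.1 :=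
    HasFDerivAt.comp_hasDerivAt z.1
      ((hF.differentiable (by simp)) (z.1, z.2)).hasFDerivAt hpair
  simpa [Dt] using h.deriv

lemma Dx_contDiff (hF : ContDiff ℝ (⊤ : ℕ∞) F) : ContDiff ℝ (⊤ : ℕ∞) (Dx F) := by
  have h1 : ContDiff ℝ (⊤ : ℕ∞) (fun z : ℝ × ℝ => fderiv ℝ F z ((0 : ℝ), (1 : ℝ))) :=
    (hF.fderiv_right (by simp)).clm_apply contDiff_const
  have heq : Dx F = fun z : ℝ × ℝ => fderiv ℝ F z ((0 : ℝ), (1 : ℝ)) :=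
    funext (Dx_eq_fderiv hF)
  rw [heq]; exact h1

end aux

lemma deriv_pow_shift (k q p₀ x : ℝ) (h : x + p₀ > 0) :
    deriv (fun s => k * (s + p₀) ^ (1 + q)) x = k * ((1 + q) * (x + p₀) ^ q) := by
  have h1 : HasDerivAt (fun s : ℝ => s + p₀) 1 x := (hasDerivAt_id x).add_const p₀
  have h2 : HasDerivAt (fun y : ℝ => y ^ (1 + q))
      ((1 + q) * (x + p₀) ^ (1 + q - 1)) (x + p₀) :=
    Real.hasDerivAt_rpow_const (Or.inl h.ne')
  have h3 := (h2.comp x h1).const_mul k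
  have : (1 + q - 1) = q := by ring
  rw [this] at h3
  simpa using h3.deriv

/-- Finite form of the potential scaling symmetry (characteristic
`Pᵘ = −(q+2)u − q x uₓ`) of the first-layer potential system for
`f(p) = k (p+p₀)^(1+q)`: for `λ > 0`, the pair
`p̃(t,x) = λ⁻² (p(t, λ^{−q} x) + p₀) − p₀`, `ũ(t,x) = λ^{−(q+2)} u(t, λ^{−q} x)`
is again a solution. -/
theorem firstLayerPotential_scaling_symmetry
    (k q p₀ β c μ : ℝ)
    (p u : ℝ × ℝ → ℝ) (hp : ContDiff ℝ (⊤ : ℕ∞) p) (hu : ContDiff ℝ (⊤ : ℕ∞) u)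
    (hpos : ∀ z : ℝ × ℝ, p z + p₀ > 0)
    (hsys : FirstLayerPotentialSystem (fun s => k * (s + p₀) ^ (1 + q)) β c μ p u)
    (lam : ℝ) (hlam : lam > 0) :
    (∀ z : ℝ × ℝ,
      (lam ^ (-2 : ℝ) * (p (z.1, lam ^ (-q) * z.2) + p₀) - p₀) + p₀ > 0) ∧
    FirstLayerPotentialSystem (fun s => k * (s + p₀) ^ (1 + q)) β c μ
      (fun z => lam ^ (-2 : ℝ) * (p (z.1, lam ^ (-q) * z.2) + p₀) - p₀)
      (fun z => lam ^ (-(q + 2)) * u (z.1, lam ^ (-q) * z.2)) := by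
  set a : ℝ := lam ^ (-q) with ha
  set b : ℝ := lam ^ (-2 : ℝ) with hb
  set d : ℝ := lam ^ (-(q + 2)) with hd
  have hapos : 0 < a := Real.rpow_pos_of_pos hlam _
  have hbpos : 0 < b := Real.rpow_pos_of_pos hlam _
  have hpos' : ∀ z : ℝ × ℝ, (b * (p (z.1, a * z.2) + p₀) - p₀) + p₀ > 0 := by
    intro z
    have := hpos (z.1, a * z.2)
    nlinarith
  refine ⟨hpos', ?_⟩
  -- differentiability of Dx p slices
  have hDxp : ContDiff ℝ (⊤ : ℕ∞) (Dx p) := Dx_contDiff hp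
  intro z
  set w : ℝ × ℝ := (z.1, a * z.2) with hw
  -- scaling map derivative
  have hscale : HasDerivAt (fun y : ℝ => a * y) a z.2 := by
    simpa using (hasDerivAt_id z.2).const_mul a
  -- derivatives of p-tilde
  have hpt : HasDerivAt (fun s => b * (p (s, a * z.2) + p₀) - p₀)
      (b * Dt p w) z.1 :=
    (((slice_t_hasDerivAt hp z.1 (a * z.2)).add_const p₀).const_mul b).sub_const p₀
  have hpx : HasDerivAt (fun y => b * (p (z.1, a * y) + p₀) - p₀)
      (b * (Dx p w * a)) z.2 :=
    ((((slice_x_hasDerivAt hp z.1 (a * z.2)).comp z.2 hscale).add_const p₀).const_mul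
        b).sub_const p₀
  -- Dt p-tilde and Dx p-tilde as equations
  have hDtpt : Dt (fun z : ℝ × ℝ => b * (p (z.1, a * z.2) + p₀) - p₀) z = b * Dt p w :=
    hpt.deriv
  have hDxpt : Dx (fun z : ℝ × ℝ => b * (p (z.1, a * z.2) + p₀) - p₀) z
      = (b * a) * Dx p w := by
    rw [show (b * a) * Dx p w = b * (Dx p w * a) by ring]
    exact hpx.deriv
  -- Dx p-tilde as a function
  have hDxpt_fun : Dx (fun z : ℝ × ℝ => b * (p (z.1, a * z.2) + p₀) - p₀)
      = fun z : ℝ × ℝ => (b * a) * Dx p (z.1, a * z.2) := by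
    funext z'
    have hscale' : HasDerivAt (fun y : ℝ => a * y) a z'.2 := by
      simpa using (hasDerivAt_id z'.2).const_mul a
    have hpx' : HasDerivAt (fun y => b * (p (z'.1, a * y) + p₀) - p₀)
        (b * (Dx p (z'.1, a * z'.2) * a)) z'.2 :=
      ((((slice_x_hasDerivAt hp z'.1 (a * z'.2)).comp z'.2 hscale').add_const p₀).const_mul
          b).sub_const p₀
    rw [show Dx (fun z : ℝ × ℝ => b * (p (z.1, a * z.2) + p₀) - p₀) z'
        = deriv (fun y => b * (p (z'.1, a * y) + p₀) - p₀) z'.2 from rfl,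
      hpx'.deriv]
    ring
  -- second derivatives of p-tilde
  have hDxDxpt : Dx (Dx (fun z : ℝ × ℝ => b * (p (z.1, a * z.2) + p₀) - p₀)) z
      = (b * a * a) * Dx (Dx p) w := by
    rw [hDxpt_fun]
    have h1 : HasDerivAt (fun y => (b * a) * Dx p (z.1, a * y))
        ((b * a) * (Dx (Dx p) w * a)) z.2 :=
      ((slice_x_hasDerivAt hDxp z.1 (a * z.2)).comp z.2 hscale).const_mul (b * a)
    rw [show Dx (fun z : ℝ × ℝ => (b * a) * Dx p (z.1, a * z.2)) z
        = deriv (fun y => (b * a) * Dx p (z.1, a * y)) z.2 from rfl, h1.deriv]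
    ring
  have hDtDxpt : Dt (Dx (fun z : ℝ × ℝ => b * (p (z.1, a * z.2) + p₀) - p₀)) z
      = (b * a) * Dt (Dx p) w := by
    rw [hDxpt_fun]
    have h1 : HasDerivAt (fun s => (b * a) * Dx p (s, a * z.2))
        ((b * a) * Dt (Dx p) w) z.1 :=
      (slice_t_hasDerivAt hDxp z.1 (a * z.2)).const_mul (b * a)
    exact h1.deriv
  -- derivatives of u-tilde
  have hDtut : Dt (fun z : ℝ × ℝ => d * u (z.1, a * z.2)) z = d * Dt u w :=
    ((slice_t_hasDerivAt hu z.1 (a * z.2)).const_mul d).deriv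
  have hDxut : Dx (fun z : ℝ × ℝ => d * u (z.1, a * z.2)) z = (d * a) * Dx u w := by
    have h1 : HasDerivAt (fun y => d * u (z.1, a * y)) (d * (Dx u w * a)) z.2 :=
      ((slice_x_hasDerivAt hu z.1 (a * z.2)).comp z.2 hscale).const_mul d
    rw [show Dx (fun z : ℝ × ℝ => d * u (z.1, a * z.2)) z
        = deriv (fun y => d * u (z.1, a * y)) z.2 from rfl, h1.deriv]
    ring
  -- the original system at w
  obtain ⟨hs1, hs2⟩ := hsys w
  have hpw : p w + p₀ > 0 := hpos w
  -- rewrite deriv f at p w and at p-tilde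
  have hf1 : deriv (fun s => k * (s + p₀) ^ (1 + q)) (p w)
      = k * ((1 + q) * (p w + p₀) ^ q) := deriv_pow_shift k q p₀ (p w) hpw
  have hptpos : (b * (p w + p₀) - p₀) + p₀ > 0 := by
    have : 0 < b * (p w + p₀) := by positivity
    linarith
  have hf2 : deriv (fun s => k * (s + p₀) ^ (1 + q)) (b * (p w + p₀) - p₀)
      = k * ((1 + q) * (b ^ q * (p w + p₀) ^ q)) := by
    rw [deriv_pow_shift k q p₀ _ hptpos,
      show b * (p w + p₀) - p₀ + p₀ = b * (p w + p₀) by ring,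
      Real.mul_rpow hbpos.le hpw.le]
  -- power identities
  have e1 : d * a = b ^ q * b := by
    rw [hb, ← Real.rpow_mul hlam.le, hd, ha, ← Real.rpow_add hlam, ← Real.rpow_add hlam]
    congr 1; ring
  have e2 : d * a = b * a * a := by
    rw [ha, hb, hd, ← Real.rpow_add hlam, ← Real.rpow_add hlam, ← Real.rpow_add hlam]
    congr 1; ring
  have e3 : d = b * a := by
    rw [ha, hb, hd, ← Real.rpow_add hlam]
    congr 1; ring
  constructor
  · rw [hDxut, hDtpt, hDxDxpt, hf2, hs1, hf1]
    linear_combination (k * ((1 + q) * (p w + p₀) ^ q) * Dt p w) * e1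
      - (μ * Dx (Dx p) w) * e2
  · rw [hDtut, hDxpt, hDtDxpt, hs2, e3]
    ring
end
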